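/- Let K ≥ 2 and let α : Fin K → Fin K → ℝ be nonnegative channel strengths satisfying the strict TIN-optimality condition: for every i, α i i > (max over j ≠ i of α j i) + (max over k ≠ i of α i k). Then the maximum of ∑_k d k over the TIN region D(α) is attained at some tuple d with d k > 0 for every k. -/

import Mathlib

open scoped BigOperators

/-- The maximum of `g j` over all `j ≠ i`, expressed as a supremum over the
(finite, and for `K ≥ 2` nonempty) subtype `{j // j ≠ i}`. -/
noncomputable def maxNe {K : ℕ} (g : Fin K → ℝ) (i : Fin K) : ℝ :=
  ⨆ j : {j : Fin K // j ≠ i}, g j.1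

/-- The TIN region for channel strengths `α`: nonnegative tuples satisfying
all singleton-cycle and cycle constraints. -/
def tinRegion {K : ℕ} (α : Fin K → Fin K → ℝ) : Set (Fin K → ℝ) :=
  {d | (∀ k, 0 ≤ d k) ∧ (∀ k, d k ≤ α k k) ∧
    ∀ σ : Equiv.Perm (Fin K), σ.IsCycle →
      ∑ k ∈ σ.support, d k ≤ ∑ k ∈ σ.support, (α k k - α (σ k) k)}

lemma le_maxNe {K : ℕ} (g : Fin K → ℝ) {i j : Fin K} (h : j ≠ i) : g j ≤ maxNe g i := by
  have hb : BddAbove (Set.range fun j : {j : Fin K // j ≠ i} => g j.1) :=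
    (Set.finite_range _).bddAbove
  exact le_ciSup hb ⟨j, h⟩

lemma maxNe_nonneg {K : ℕ} (hK : 2 ≤ K) {g : Fin K → ℝ} (hg : ∀ j, 0 ≤ g j) (i : Fin K) :
    0 ≤ maxNe g i := by
  obtain ⟨j, hj⟩ := Fintype.exists_ne_of_one_lt_card (by simp only [Fintype.card_fin]; omega) i
  exact (hg j).trans (le_maxNe g hj)

/-- Under the strict TIN-optimality condition, the maximum of the coordinate
sum over the TIN region is attained at a tuple all of whose coordinates are
strictly positive. -/
theorem sumGDoF_attained_at_positive_tuple
    (K : ℕ) (hK : 2 ≤ K) (α : Fin K → Fin K → ℝ)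
    (hpos : ∀ i j, 0 ≤ α i j)
    (hstrict : ∀ i, maxNe (fun j => α j i) i + maxNe (fun k => α i k) i < α i i) :
    ∃ d ∈ tinRegion α, (∀ k, 0 < d k) ∧
      ∀ d' ∈ tinRegion α, ∑ k, d' k ≤ ∑ k, d k := by
  classical
  set δ : Fin K → ℝ :=
    fun i => α i i - maxNe (fun j => α j i) i - maxNe (fun k => α i k) i with hδ
  have hm1 : ∀ i, 0 ≤ maxNe (fun j => α j i) i :=
    fun i => maxNe_nonneg hK (fun j => hpos j i) i
  have hm2 : ∀ i, 0 ≤ maxNe (fun k => α i k) i :=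
    fun i => maxNe_nonneg hK (fun k => hpos i k) i
  have hδpos : ∀ i, 0 < δ i := by
    intro i; have := hstrict i; simp only [hδ]; linarith
  have hαpos : ∀ i, 0 < α i i := by
    intro i; have := hstrict i; have := hm1 i; have := hm2 i; linarith
  have hterm : ∀ (σ : Equiv.Perm (Fin K)) (k : Fin K), σ k ≠ k → 0 ≤ α k k - α (σ k) k := by
    intro σ k hk
    have h1 : α (σ k) k ≤ maxNe (fun j => α j k) k := le_maxNe (fun j => α j k) hk
    have := hstrict k; have := hm2 k; linarith
  have h0 : (0 : Fin K → ℝ) ∈ tinRegion α := by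
    refine ⟨fun k => le_refl 0, fun k => by simpa using (hαpos k).le, ?_⟩
    intro σ hσ
    simp only [Pi.zero_apply, Finset.sum_const_zero]
    exact Finset.sum_nonneg fun k hk => hterm σ k (Equiv.Perm.mem_support.mp hk)
  have hsub : tinRegion α ⊆ Set.pi Set.univ (fun k => Set.Icc (0 : ℝ) (α k k)) := by
    intro d hd k _
    exact ⟨hd.1 k, hd.2.1 k⟩
  have hcpt : IsCompact (tinRegion α) := by
    refine (isCompact_univ_pi (fun k => isCompact_Icc)).of_isClosed_subset ?_ hsub
    have heq : tinRegion α =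
        (⋂ k, {d : Fin K → ℝ | 0 ≤ d k}) ∩ ((⋂ k, {d : Fin K → ℝ | d k ≤ α k k}) ∩
        (⋂ σ : Equiv.Perm (Fin K), ⋂ _ : σ.IsCycle,
          {d : Fin K → ℝ | ∑ k ∈ σ.support, d k ≤ ∑ k ∈ σ.support, (α k k - α (σ k) k)})) := by
      ext d
      simp only [tinRegion, Set.mem_setOf_eq, Set.mem_inter_iff, Set.mem_iInter]

    rw [heq]
    refine IsClosed.inter (isClosed_iInter fun k =>
        isClosed_le continuous_const (continuous_apply k)) (IsClosed.inter
      (isClosed_iInter fun k => isClosed_le (continuous_apply k) continuous_const)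
      (isClosed_iInter fun σ => isClosed_iInter fun _ =>
        isClosed_le (continuous_finset_sum _ fun k _ => continuous_apply k) continuous_const))
  obtain ⟨d, hd, hmax⟩ := hcpt.exists_isMaxOn ⟨0, h0⟩
    ((continuous_finset_sum Finset.univ fun k _ => continuous_apply k).continuousOn :
      ContinuousOn (fun d : Fin K → ℝ => ∑ k, d k) (tinRegion α))
  refine ⟨d, hd, ?_, fun d' hd' => hmax hd'⟩
  intro k
  by_contra hk
  have hdk : d k = 0 := le_antisymm (not_lt.mp hk) (hd.1 k)
  set ε := δ k with hε
  set d2 : Fin K → ℝ := fun j => if j = k then ε else d j with hd2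
  have hd2k : d2 k = ε := by simp [hd2]
  have hd2ne : ∀ j, j ≠ k → d2 j = d j := by intro j hj; simp [hd2, hj]
  -- membership of the perturbed point
  have hd2mem : d2 ∈ tinRegion α := by
    refine ⟨?_, ?_, ?_⟩
    · intro j
      rcases eq_or_ne j k with rfl | hj
      · rw [hd2k]; exact (hδpos j).le
      · rw [hd2ne j hj]; exact hd.1 j
    · intro j
      rcases eq_or_ne j k with rfl | hj
      · rw [hd2k]; have := hm1 j; have := hm2 j; simp only [hε, hδ]; linarith
      · rw [hd2ne j hj]; exact hd.2.1 j
    · intro σ hσ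
      by_cases hkS : k ∈ σ.support
      · have hσk : σ k ≠ k := Equiv.Perm.mem_support.mp hkS
        have hsplit : ∑ j ∈ σ.support, d2 j = (∑ j ∈ σ.support.erase k, d j) + ε := by
          rw [← Finset.sum_erase_add _ _ hkS, hd2k]
          congr 1
          exact Finset.sum_congr rfl fun j hj => hd2ne j (Finset.ne_of_mem_erase hj)
        set b := σ k with hb
        have hbk : b ≠ k := hσk
        have hαbk : α b k ≤ maxNe (fun j => α j k) k := le_maxNe (fun j => α j k) hbk
        by_cases hB : σ b = k
        · -- two-cycle: σ = swap k b
          have hσeq : σ = Equiv.swap k b := hσ.eq_swap_of_apply_apply_eq_self hσk hB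
          have hS : σ.support = {k, b} := by
            rw [hσeq]; exact Equiv.Perm.support_swap (Ne.symm hbk)
          have hαkb : α k b ≤ maxNe (fun m => α k m) k := le_maxNe (fun m => α k m) hbk
          rw [hsplit, hS]
          have herase : ({k, b} : Finset (Fin K)).erase k = {b} := by
            rw [Finset.erase_insert (by simpa using Ne.symm hbk)]
          rw [herase, Finset.sum_singleton,
            Finset.sum_pair (Ne.symm hbk), ← hb, hB]
          have hdb := hd.2.1 b
          simp only [hε, hδ]
          linarith
        · -- longer cycle: remove k from σ
          set a := σ⁻¹ k with ha
          have haσ : σ a = k := Equiv.apply_symm_apply σ k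
          have hak : a ≠ k := by
            intro h; rw [h] at haσ; exact hσk haσ
          have haS : a ∈ σ.support := by
            rw [Equiv.Perm.mem_support, haσ]; exact Ne.symm hak
          have hba : b ≠ a := by
            intro h; rw [← h] at haσ; exact hB haσ
          have hαka : α k a ≤ maxNe (fun m => α k m) k := le_maxNe (fun m => α k m) hak
          set σ' : Equiv.Perm (Fin K) := Equiv.swap k b * σ with hσ'def
          have hσ' : σ'.IsCycle := hσ.swap_mul hσk hB
          have hσ'a : σ' a = b := by
            simp [hσ'def, Equiv.Perm.mul_apply, haσ, Equiv.swap_apply_left]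
          have hσ'ne : ∀ j, j ≠ k → j ≠ a → σ' j = σ j := by
            intro j hjk hja
            have h1 : σ j ≠ k := fun h => hja (by
              have : j = σ⁻¹ k := by rw [← h]; exact (Equiv.symm_apply_apply σ j).symm
              rw [this, ← ha])
            have h2 : σ j ≠ b := fun h => hjk (σ.injective (by rw [h, hb]))
            simp [hσ'def, Equiv.Perm.mul_apply, Equiv.swap_apply_of_ne_of_ne h1 h2]
          have hsupp' : σ'.support = σ.support.erase k := by
            ext j
            simp only [Equiv.Perm.mem_support, Finset.mem_erase]
            constructor
            · intro hj
              rcases eq_or_ne j k with rfl | hjk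
              · exfalso; apply hj
                simp [hσ'def, Equiv.Perm.mul_apply, ← hb, Equiv.swap_apply_right]
              · refine ⟨hjk, ?_⟩
                intro hσj
                apply hj
                rcases eq_or_ne j a with rfl | hja
                · exact absurd (haσ.symm.trans hσj) (Ne.symm hak)
                · rw [hσ'ne j hjk hja, hσj]
            · rintro ⟨hjk, hσj⟩
              rcases eq_or_ne j a with rfl | hja
              · rw [hσ'a]; exact hba
              · rw [hσ'ne j hjk hja]; exact hσj
          have hcyc' := hd.2.2 σ' hσ'
          rw [hsupp'] at hcyc'
          -- compare right-hand sides
          have haT : a ∈ σ.support.erase k := Finset.mem_erase.mpr ⟨hak, haS⟩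
          have hRHS' : ∑ j ∈ σ.support.erase k, (α j j - α (σ' j) j) =
              (∑ j ∈ (σ.support.erase k).erase a, (α j j - α (σ j) j)) + (α a a - α b a) := by
            rw [← Finset.sum_erase_add _ _ haT, hσ'a]
            congr 1
            refine Finset.sum_congr rfl fun j hj => ?_
            have hja := Finset.ne_of_mem_erase hj
            have hjk := Finset.ne_of_mem_erase (Finset.mem_of_mem_erase hj)
            rw [hσ'ne j hjk hja]
          have hRHS : ∑ j ∈ σ.support, (α j j - α (σ j) j) =
              (∑ j ∈ (σ.support.erase k).erase a, (α j j - α (σ j) j))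
                + (α a a - α k a) + (α k k - α b k) := by
            rw [← Finset.sum_erase_add _ _ hkS, ← Finset.sum_erase_add _ _ haT, haσ, ← hb]
          have hαba : 0 ≤ α b a := hpos b a
          rw [hsplit, hRHS]
          rw [hRHS'] at hcyc'
          simp only [hε, hδ]
          linarith
      · -- k is not in the support: sums agree
        have : ∑ j ∈ σ.support, d2 j = ∑ j ∈ σ.support, d j :=
          Finset.sum_congr rfl fun j hj => hd2ne j (fun h => hkS (h ▸ hj))
        rw [this]
        exact hd.2.2 σ hσ
  -- the perturbed point has a strictly larger sum, contradiction
  have hsum : ∑ j, d2 j = (∑ j, d j) + ε := by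
    rw [← Finset.sum_erase_add Finset.univ d2 (Finset.mem_univ k), hd2k,
      ← Finset.sum_erase_add Finset.univ d (Finset.mem_univ k), hdk]
    rw [add_zero]
    congr 1
    exact Finset.sum_congr rfl fun j hj => hd2ne j (Finset.ne_of_mem_erase hj)
  have hle := hmax hd2mem
  simp only [Set.mem_setOf_eq] at hle
  rw [hsum] at hle
  have := hδpos k
  simp only [← hε] at this
  linarith
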